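/- Let r₀ ∈ (0,1) be the unique zero in (0,1) of the derivative of φ. Let W > 0 satisfy 1/(1+W) > r₀ and let λ satisfy Λ_*(W) < λ < (1+W)³·φ(r₀)². Then there exist exactly two values m ∈ (0,1) such that λ = (1+W)³·φ(m/(1+W))². -/

import Mathlib

/-- `φ(r) = √(r(1−r)) + (1−r)^{3/2}·log(1+√r) − (1/2)(1−r)^{3/2}·log(1−r)`. -/
noncomputable def phi (r : ℝ) : ℝ :=
  Real.sqrt (r * (1 - r)) + (1 - r) ^ ((3 : ℝ) / 2) * Real.log (1 + Real.sqrt r)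
    - (1 / 2) * (1 - r) ^ ((3 : ℝ) / 2) * Real.log (1 - r)

/-- `Λ_*(W) = (1+W)³·φ(1/(1+W))²`. -/
noncomputable def LambdaStar (W : ℝ) : ℝ := (1 + W) ^ 3 * (phi (1 / (1 + W))) ^ 2

/-!
By Darboux's theorem `φ'` has constant sign on each side of its unique critical point `r₀`.
Since `φ 0 = 0 < φ r₀`, and the bounds on `λ` force `φ (1/(1+W)) < φ r₀`, the function `φ`
increases on `[0, r₀]` and decreases on `[r₀, 1/(1+W)]`. Hence `m ↦ (1+W)³ φ(m/(1+W))²` is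
unimodal on `[0, 1]`, with peak `(1+W)³ φ(r₀)²` at `m = r₀(1+W)` and endpoint values `0` and
`Λ_*(W)`, so by the intermediate value theorem every level strictly between `Λ_*(W)` and the
peak is attained exactly once on each side of the peak.
-/

open Set

section Unimodal

variable {f : ℝ → ℝ} {a b : ℝ}

theorem strictMonoOn_or_strictAntiOn_Icc_of_deriv_ne_zero (hf : ContinuousOn f (Icc a b))
    (hd : DifferentiableOn ℝ f (Ioo a b)) (hne : ∀ x ∈ Ioo a b, deriv f x ≠ 0) :
    StrictMonoOn f (Icc a b) ∨ StrictAntiOn f (Icc a b) := by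
  have hderiv : ∀ x ∈ Ioo a b, HasDerivWithinAt f (deriv f x) (Ioo a b) x := fun x hx =>
    (hd.differentiableAt (isOpen_Ioo.mem_nhds hx)).hasDerivAt.hasDerivWithinAt
  rcases hasDerivWithinAt_forall_lt_or_forall_gt_of_forall_ne (convex_Ioo a b) hderiv hne
    with hneg | hpos
  · exact Or.inr <| strictAntiOn_of_deriv_neg (convex_Icc a b) hf (by rwa [interior_Icc])
  · exact Or.inl <| strictMonoOn_of_deriv_pos (convex_Icc a b) hf (by rwa [interior_Icc])

theorem strictMonoOn_Icc_of_deriv_ne_zero (hab : a ≤ b) (hf : ContinuousOn f (Icc a b))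
    (hd : DifferentiableOn ℝ f (Ioo a b)) (hne : ∀ x ∈ Ioo a b, deriv f x ≠ 0)
    (hlt : f a < f b) : StrictMonoOn f (Icc a b) :=
  (strictMonoOn_or_strictAntiOn_Icc_of_deriv_ne_zero hf hd hne).resolve_right fun hanti =>
    (hanti.antitoneOn (left_mem_Icc.2 hab) (right_mem_Icc.2 hab) hab).not_gt hlt

theorem strictAntiOn_Icc_of_deriv_ne_zero (hab : a ≤ b) (hf : ContinuousOn f (Icc a b))
    (hd : DifferentiableOn ℝ f (Ioo a b)) (hne : ∀ x ∈ Ioo a b, deriv f x ≠ 0)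
    (hlt : f b < f a) : StrictAntiOn f (Icc a b) :=
  (strictMonoOn_or_strictAntiOn_Icc_of_deriv_ne_zero hf hd hne).resolve_left fun hmono =>
    (hmono.monotoneOn (left_mem_Icc.2 hab) (right_mem_Icc.2 hab) hab).not_gt hlt

theorem exists_pair_level_set_of_unimodal {c y : ℝ} (hac : a ≤ c) (hcb : c ≤ b)
    (hf : ContinuousOn f (Icc a b)) (hmono : StrictMonoOn f (Icc a c))
    (hanti : StrictAntiOn f (Icc c b)) (ha : f a < y) (hb : f b < y) (hc : y < f c) :
    ∃ x₁ x₂, x₁ ∈ Ioo a c ∧ x₂ ∈ Ioo c b ∧ f x₁ = y ∧ f x₂ = y ∧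
      ∀ x ∈ Icc a b, f x = y → x = x₁ ∨ x = x₂ := by
  obtain ⟨x₁, hx₁, hfx₁⟩ :=
    intermediate_value_Ioo hac (hf.mono (Icc_subset_Icc_right hcb)) ⟨ha, hc⟩
  obtain ⟨x₂, hx₂, hfx₂⟩ :=
    intermediate_value_Ioo' hcb (hf.mono (Icc_subset_Icc_left hac)) ⟨hb, hc⟩
  refine ⟨x₁, x₂, hx₁, hx₂, hfx₁, hfx₂, fun x hx hfx => ?_⟩
  rcases le_total x c with hxc | hcx
  · exact Or.inl <| hmono.injOn ⟨hx.1, hxc⟩ (Ioo_subset_Icc_self hx₁) (hfx.trans hfx₁.symm)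
  · exact Or.inr <| hanti.injOn ⟨hcx, hx.2⟩ (Ioo_subset_Icc_self hx₂) (hfx.trans hfx₂.symm)

end Unimodal

theorem phi_zero : phi 0 = 0 := by
  simp [phi]

theorem phi_nonneg {r : ℝ} (h0 : 0 ≤ r) (h1 : r ≤ 1) : 0 ≤ phi r := by
  have hlog : Real.log (1 - r) ≤ 0 := Real.log_nonpos (by linarith) (by linarith)
  have hpow : 0 ≤ (1 - r) ^ ((3 : ℝ) / 2) := Real.rpow_nonneg (by linarith) _
  have hlog' : 0 ≤ Real.log (1 + Real.sqrt r) := Real.log_nonneg (by simp)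
  unfold phi
  nlinarith [Real.sqrt_nonneg (r * (1 - r))]

theorem phi_pos {r : ℝ} (h0 : 0 < r) (h1 : r < 1) : 0 < phi r := by
  have hsqrt : 0 < Real.sqrt (r * (1 - r)) := Real.sqrt_pos.2 (by nlinarith)
  have hlog : Real.log (1 - r) < 0 := Real.log_neg (by linarith) (by linarith)
  have hpow : 0 < (1 - r) ^ ((3 : ℝ) / 2) := Real.rpow_pos_of_pos (by linarith) _
  have hlog' : 0 ≤ Real.log (1 + Real.sqrt r) := Real.log_nonneg (by simp)
  unfold phi
  nlinarith

theorem continuousOn_phi : ContinuousOn phi (Ico 0 1) := by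
  rintro r ⟨-, h1⟩
  apply ContinuousAt.continuousWithinAt
  unfold phi
  fun_prop (disch := first | positivity | (apply ne_of_gt; linarith) | norm_num)

theorem differentiableOn_phi : DifferentiableOn ℝ phi (Ioo 0 1) := by
  rintro r ⟨h0, h1⟩
  apply DifferentiableAt.differentiableWithinAt
  unfold phi
  fun_prop (disch := first | positivity | (apply ne_of_gt; linarith))

section CriticalPoint

variable {r₀ : ℝ}

theorem strictMonoOn_phi_Icc_zero (hr₀ : r₀ ∈ Ioo (0 : ℝ) 1)
    (huniq : ∀ r ∈ Ioo (0 : ℝ) 1, deriv phi r = 0 → r = r₀) :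
    StrictMonoOn phi (Icc 0 r₀) := by
  refine strictMonoOn_Icc_of_deriv_ne_zero hr₀.1.le
    (continuousOn_phi.mono (Icc_subset_Ico_right hr₀.2))
    (differentiableOn_phi.mono (Ioo_subset_Ioo_right hr₀.2.le)) (fun r hr hcrit => ?_) ?_
  · exact hr.2.ne (huniq r ⟨hr.1, hr.2.trans hr₀.2⟩ hcrit)
  · simpa [phi_zero] using phi_pos hr₀.1 hr₀.2

theorem strictAntiOn_phi_Icc (hr₀ : r₀ ∈ Ioo (0 : ℝ) 1)
    (huniq : ∀ r ∈ Ioo (0 : ℝ) 1, deriv phi r = 0 → r = r₀) {s : ℝ} (hrs : r₀ ≤ s) (hs : s < 1)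
    (hlt : phi s < phi r₀) : StrictAntiOn phi (Icc r₀ s) := by
  refine strictAntiOn_Icc_of_deriv_ne_zero hrs
    (continuousOn_phi.mono (Icc_subset_Ico hr₀.1.le hs))
    (differentiableOn_phi.mono (Ioo_subset_Ioo hr₀.1.le hs.le)) (fun r hr hcrit => ?_) hlt
  exact hr.1.ne' (huniq r ⟨hr₀.1.trans hr.1, hr.2.trans hs⟩ hcrit)

end CriticalPoint

noncomputable def shootingLambda (W m : ℝ) : ℝ := (1 + W) ^ 3 * phi (m / (1 + W)) ^ 2

section Shooting

variable {W : ℝ}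

theorem shootingLambda_one : shootingLambda W 1 = LambdaStar W := rfl

theorem shootingLambda_zero : shootingLambda W 0 = 0 := by
  simp [shootingLambda, phi_zero]

theorem shootingLambda_mul_self {r : ℝ} (hW : 0 < 1 + W) :
    shootingLambda W (r * (1 + W)) = (1 + W) ^ 3 * phi r ^ 2 := by
  rw [shootingLambda, mul_div_cancel_right₀ r hW.ne']

theorem continuousOn_shootingLambda (hW : 0 < W) :
    ContinuousOn (shootingLambda W) (Icc 0 1) := by
  have hmaps : MapsTo (· / (1 + W)) (Icc 0 1) (Ico 0 1) := fun m hm =>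
    ⟨div_nonneg hm.1 (by linarith), (div_lt_one (by linarith)).2 (by linarith [hm.2])⟩
  exact continuousOn_const.mul
    ((continuousOn_phi.comp (continuousOn_id.div_const _) hmaps).pow 2)

theorem strictMonoOn_shootingLambda {r : ℝ} (hW : 0 < 1 + W)
    (hφ : StrictMonoOn phi (Icc 0 r)) :
    StrictMonoOn (shootingLambda W) (Icc 0 (r * (1 + W))) := by
  have hmaps : MapsTo (· / (1 + W)) (Icc 0 (r * (1 + W))) (Icc 0 r) := fun m hm =>
    ⟨div_nonneg hm.1 hW.le, (div_le_iff₀ hW).2 hm.2⟩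
  intro m hm m' hm' hlt
  have hpos : 0 ≤ phi (m / (1 + W)) := by
    rw [← phi_zero]
    exact hφ.monotoneOn (left_mem_Icc.2 ((hmaps hm).1.trans (hmaps hm).2)) (hmaps hm)
      (hmaps hm).1
  unfold shootingLambda
  gcongr
  exact hφ (hmaps hm) (hmaps hm') (div_lt_div_of_pos_right hlt hW)

theorem strictAntiOn_shootingLambda {r : ℝ} (hW : 0 < W)
    (hφ : StrictAntiOn phi (Icc r (1 / (1 + W)))) :
    StrictAntiOn (shootingLambda W) (Icc (r * (1 + W)) 1) := by
  have hW' : 0 < 1 + W := by linarith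
  have hmaps : MapsTo (· / (1 + W)) (Icc (r * (1 + W)) 1) (Icc r (1 / (1 + W))) := fun m hm =>
    ⟨(le_div_iff₀ hW').2 hm.1, div_le_div_of_nonneg_right hm.2 hW'.le⟩
  intro m hm m' hm' hlt
  have hpos : 0 ≤ phi (m' / (1 + W)) := by
    have hs : 1 / (1 + W) ≤ 1 := (div_le_one hW').2 (by linarith)
    exact (phi_nonneg (by positivity) hs).trans <|
      hφ.antitoneOn (hmaps hm') (right_mem_Icc.2 ((hmaps hm').1.trans (hmaps hm').2))
        (hmaps hm').2
  unfold shootingLambda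
  gcongr
  exact hφ (hmaps hm) (hmaps hm') (div_lt_div_of_pos_right hlt hW')

end Shooting

theorem stmt_16_general (r₀ W lam : ℝ)
    (hr₀ : r₀ ∈ Set.Ioo (0 : ℝ) 1)
    (huniq : ∀ r ∈ Set.Ioo (0 : ℝ) 1, deriv phi r = 0 → r = r₀)
    (hW : 0 < W) (hWr : r₀ < 1 / (1 + W))
    (hlam0 : LambdaStar W < lam) (hlam1 : lam < (1 + W) ^ 3 * (phi r₀) ^ 2) :
    ∃ m₁ m₂ : ℝ, m₁ ∈ Set.Ioo (0 : ℝ) 1 ∧ m₂ ∈ Set.Ioo (0 : ℝ) 1 ∧ m₁ ≠ m₂ ∧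
      lam = (1 + W) ^ 3 * (phi (m₁ / (1 + W))) ^ 2 ∧
      lam = (1 + W) ^ 3 * (phi (m₂ / (1 + W))) ^ 2 ∧
      ∀ m ∈ Set.Ioo (0 : ℝ) 1,
        lam = (1 + W) ^ 3 * (phi (m / (1 + W))) ^ 2 → m = m₁ ∨ m = m₂ := by
  have hv : 0 < 1 + W := by linarith
  have hs : 1 / (1 + W) < 1 := (div_lt_one hv).2 (by linarith)
  have hpeak : r₀ * (1 + W) < 1 := (lt_div_iff₀ hv).1 (by simpa using hWr)
  have hpeak₀ : 0 < r₀ * (1 + W) := mul_pos hr₀.1 hv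
  have hφ : phi (1 / (1 + W)) < phi r₀ :=
    lt_of_pow_lt_pow_left₀ 2 (phi_pos hr₀.1 hr₀.2).le
      (lt_of_mul_lt_mul_left (hlam0.trans hlam1) (by positivity))
  have hlam_pos : 0 < lam :=
    (mul_nonneg (by positivity) (sq_nonneg _)).trans_lt hlam0
  obtain ⟨m₁, m₂, hm₁, hm₂, h₁, h₂, hall⟩ := exists_pair_level_set_of_unimodal
    hpeak₀.le hpeak.le (continuousOn_shootingLambda hW)
    (strictMonoOn_shootingLambda hv (strictMonoOn_phi_Icc_zero hr₀ huniq))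
    (strictAntiOn_shootingLambda hW (strictAntiOn_phi_Icc hr₀ huniq hWr.le hs hφ))
    (shootingLambda_zero.trans_lt hlam_pos) (shootingLambda_one.trans_lt hlam0)
    ((shootingLambda_mul_self hv).trans_gt hlam1)
  exact ⟨m₁, m₂, ⟨hm₁.1, hm₁.2.trans hpeak⟩, ⟨hpeak₀.trans hm₂.1, hm₂.2⟩,
    (hm₁.2.trans hm₂.1).ne, h₁.symm, h₂.symm,
    fun m hm hlam => hall m (Ioo_subset_Icc_self hm) hlam.symm⟩

/-- Case (II): for `1/(1+W) > r₀` and `Λ_*(W) < λ < (1+W)³·φ(r₀)²`, there are exactly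
two values `m ∈ (0,1)` with `λ = (1+W)³·φ(m/(1+W))²`. -/
theorem stmt_16 (r₀ W lam : ℝ)
    (hr₀ : r₀ ∈ Set.Ioo (0 : ℝ) 1) (hzero : deriv phi r₀ = 0)
    (huniq : ∀ r ∈ Set.Ioo (0 : ℝ) 1, deriv phi r = 0 → r = r₀)
    (hW : 0 < W) (hWr : r₀ < 1 / (1 + W))
    (hlam0 : LambdaStar W < lam) (hlam1 : lam < (1 + W) ^ 3 * (phi r₀) ^ 2) :
    ∃ m₁ m₂ : ℝ, m₁ ∈ Set.Ioo (0 : ℝ) 1 ∧ m₂ ∈ Set.Ioo (0 : ℝ) 1 ∧ m₁ ≠ m₂ ∧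
      lam = (1 + W) ^ 3 * (phi (m₁ / (1 + W))) ^ 2 ∧
      lam = (1 + W) ^ 3 * (phi (m₂ / (1 + W))) ^ 2 ∧
      ∀ m ∈ Set.Ioo (0 : ℝ) 1,
        lam = (1 + W) ^ 3 * (phi (m / (1 + W))) ^ 2 → m = m₁ ∨ m = m₂ :=
  stmt_16_general r₀ W lam hr₀ huniq hW hWr hlam0 hlam1
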